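/- Let (ξ_i, 𝔉_i) be square-integrable martingale differences, S_n = Σ ξ_i, B_n(y) = Σ ξ_i² 1_{ξ_i > y} + Σ E[ξ_i² 1_{ξ_i ≤ y} | 𝔉_{i-1}]. Then for all b > 0, M ≥ 1, x > 0 and y ≥ 0, P(S_n ≥ x √(B_n(y)), b ≤ √(B_n(y)) ≤ bM) ≤ √e (1 + 2(1+x) ln M) exp{- x² / (2(1 + xy/(3b)))}. -/

import Mathlib

/-!
For `l ≥ 0` and `c` with `3 l² ≤ 2 c (3 - l y)`, the Bernstein-type inequality
`exp (l u - c u² 1{u > y}) ≤ 1 + l u + c u² 1{u ≤ y}` shows that, conditionally on `𝔉 (i - 1)`,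
each factor `exp (l ξᵢ - c ξᵢ² 1{ξᵢ > y} - c E[ξᵢ² 1{ξᵢ ≤ y} | 𝔉 (i - 1)])` has mean at most `1`;
hence `E exp (l Sₙ - c Bₙ(y)) ≤ 1`.

If `c (p + q) = l x`, then on the event `{x √Bₙ ≤ Sₙ, p ≤ √Bₙ ≤ q}` the exponent is at least
`c p q`, and Markov's inequality bounds the probability of this slice by `exp (-c p q)`.
Cutting `[b, b M]` into `K ≤ 1 + 2 (1 + x) ln M` geometric slices `[b δʲ, b δʲ⁺¹]` with
`δ = M^(1/K)`, each slice costs at most `√e · exp (-x² / (2 (1 + x y / (3 b))))`.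
-/

open MeasureTheory Real Finset

namespace Real

lemma exp_le_one_add_add_sq_div_two_of_nonpos {s : ℝ} (hs : s ≤ 0) :
    exp s ≤ 1 + s + s ^ 2 / 2 := by
  have hcubic : 1 - s + s ^ 2 / 2 - s ^ 3 / 6 ≤ exp (-s) := by
    have := sum_le_exp_of_nonneg (neg_nonneg.2 hs) 4
    norm_num [sum_range_succ, Nat.factorial] at this
    linarith
  have hinv : exp s * exp (-s) = 1 := by rw [← exp_add, add_neg_cancel, exp_zero]
  have hquad : 0 ≤ 1 + s + s ^ 2 / 2 := by nlinarith [sq_nonneg (s + 1)]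
  -- `(1 + s + s²/2) (1 - s + s²/2 - s³/6) = 1 - s³/6 + s⁴/12 - s⁵/12 ≥ 1`
  have hprod : 1 ≤ (1 + s + s ^ 2 / 2) * exp (-s) := by
    nlinarith [mul_le_mul_of_nonneg_left hcubic hquad, mul_nonneg (neg_nonneg.2 hs) (sq_nonneg s),
      mul_nonneg (sq_nonneg s) (sq_nonneg s)]
  nlinarith [exp_pos (-s), exp_pos s]

lemma exp_sub_sq_div_two_le_one_add {s : ℝ} (hs : 0 ≤ s) : exp (s - s ^ 2 / 2) ≤ 1 + s := by
  rw [← exp_log (by positivity : (0 : ℝ) < 1 + s), exp_le_exp]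
  refine le_trans ?_ (le_log_one_add_of_nonneg hs)
  rw [le_div_iff₀ (by positivity)]
  nlinarith [pow_nonneg hs 3]

lemma exp_sub_one_sub_mul_three_sub_le {s : ℝ} (hs : 0 ≤ s) :
    (exp s - 1 - s) * (3 - s) ≤ 3 * s ^ 2 / 2 := by
  have hderiv : ∀ u, 0 ≤ u → 0 ≤ 2 * u - (exp u - 1) * (2 - u) := by
    have hmono : Monotone fun u => 2 * u - (exp u - 1) * (2 - u) := by
      refine monotone_of_hasDerivAt_nonneg (f' := fun u => 1 - exp u * (1 - u)) (fun u => ?_) ?_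
      · exact (((hasDerivAt_id u).const_mul 2).sub (((hasDerivAt_exp u).sub_const 1).mul
          ((hasDerivAt_const u 2).sub (hasDerivAt_id u)))).congr_deriv
          (by simp only [Pi.sub_apply, id_eq]; ring)
      · intro u
        have := mul_le_mul_of_nonneg_left (add_one_le_exp (-u)) (exp_pos u).le
        rw [← exp_add, add_neg_cancel, exp_zero] at this
        simp only [Pi.zero_apply]
        nlinarith
    intro u hu
    simpa using hmono hu
  have hmono : MonotoneOn (fun u => 3 * u ^ 2 / 2 - (exp u - 1 - u) * (3 - u)) (Set.Ici 0) := by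
    refine monotoneOn_of_hasDerivWithinAt_nonneg (convex_Ici 0) (by fun_prop)
      (f' := fun u => 2 * u - (exp u - 1) * (2 - u)) (fun u _ => ?_) ?_
    · refine HasDerivAt.hasDerivWithinAt ?_
      exact ((((hasDerivAt_pow 2 u).const_mul 3).div_const 2).sub
        ((((hasDerivAt_exp u).sub_const 1).sub (hasDerivAt_id u)).mul
          ((hasDerivAt_const u 3).sub (hasDerivAt_id u)))).congr_deriv
          (by simp only [Pi.sub_apply, id_eq]; ring)
    · intro u hu
      rw [interior_Ici] at hu
      exact hderiv u hu.le
  simpa using hmono Set.self_mem_Ici (Set.mem_Ici.2 hs) hs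

end Real

section Pointwise

variable {l c y : ℝ}

lemma exp_mul_sub_ite_le_one_add (hl : 0 ≤ l) (hy : 0 ≤ y) (hly : l * y < 3)
    (hc : 3 * l ^ 2 ≤ 2 * c * (3 - l * y)) (u : ℝ) :
    exp (l * u - c * (if y < u then u ^ 2 else 0)) ≤
      1 + l * u + c * (if u ≤ y then u ^ 2 else 0) := by
  have hc0 : 0 ≤ c := by nlinarith
  have hlc : (l * u) ^ 2 / 2 ≤ c * u ^ 2 := by nlinarith [mul_nonneg hl hy, sq_nonneg u]
  rcases le_or_gt u y with huy | hyu
  · rw [if_neg huy.not_gt, if_pos huy, mul_zero, sub_zero]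
    rcases le_or_gt u 0 with hu | hu
    · linarith [exp_le_one_add_add_sq_div_two_of_nonpos (mul_nonpos_of_nonneg_of_nonpos hl hu)]
    · have hlu : l * u ≤ l * y := mul_le_mul_of_nonneg_left huy hl
      have := exp_sub_one_sub_mul_three_sub_le (mul_nonneg hl hu.le)
      nlinarith [mul_nonneg (mul_nonneg hc0 (sq_nonneg u)) (sub_nonneg.2 hlu)]
  · rw [if_pos hyu, if_neg hyu.not_ge, mul_zero, add_zero]
    calc exp (l * u - c * u ^ 2) ≤ exp (l * u - (l * u) ^ 2 / 2) := exp_le_exp.2 (by linarith)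
      _ ≤ 1 + l * u := exp_sub_sq_div_two_le_one_add (mul_nonneg hl (hy.trans hyu.le))

lemma exp_mul_sub_ite_le (hl : 0 ≤ l) (hy : 0 ≤ y) (hc : l ^ 2 ≤ 2 * c) (u : ℝ) :
    exp (l * u - c * (if y < u then u ^ 2 else 0)) ≤ exp (l * y + 1 / 2) := by
  rw [exp_le_exp]
  split_ifs with hyu
  · nlinarith [sq_nonneg (l * u - 1), sq_nonneg u, mul_nonneg hl hy]
  · nlinarith [mul_le_mul_of_nonneg_left (not_lt.1 hyu) hl]

end Pointwise

section Conditional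

variable {Ω : Type*} {m : MeasurableSpace Ω} {μ : Measure Ω}

lemma condExp_exp_neg_mul_condExp_mul_le_one [IsFiniteMeasure μ] {𝔊 : MeasurableSpace Ω}
    (h𝔊 : 𝔊 ≤ m) {X W g : Ω → ℝ} {l c : ℝ} (hc : 0 ≤ c) (hX : Integrable X μ)
    (hX0 : μ[X | 𝔊] =ᵐ[μ] 0) (hW : Integrable W μ) (hW0 : 0 ≤ᵐ[μ] W) (hg : Integrable g μ)
    (hgle : ∀ ω, g ω ≤ 1 + l * X ω + c * W ω) :
    μ[fun ω => exp (-(c * μ[W | 𝔊] ω)) * g ω | 𝔊] ≤ᵐ[μ] 1 := by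
  set D := μ[W | 𝔊]
  have hD0 : 0 ≤ᵐ[μ] D := condExp_nonneg hW0
  have hE : StronglyMeasurable[𝔊] fun ω => exp (-(c * D ω)) :=
    continuous_exp.comp_stronglyMeasurable (stronglyMeasurable_condExp.const_mul c).neg
  have hEle : ∀ᵐ ω ∂μ, ‖exp (-(c * D ω))‖ ≤ 1 := by
    filter_upwards [hD0] with ω hω
    rw [norm_of_nonneg (exp_pos _).le, exp_le_one_iff, neg_nonpos]
    exact mul_nonneg hc hω
  have hpull : μ[fun ω => exp (-(c * D ω)) * g ω | 𝔊] =ᵐ[μ]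
      fun ω => exp (-(c * D ω)) * μ[g | 𝔊] ω :=
    condExp_mul_of_stronglyMeasurable_left hE
      (hg.bdd_mul (hE.mono h𝔊).aestronglyMeasurable hEle) hg
  have hbound : μ[g | 𝔊] ≤ᵐ[μ] μ[(fun _ => 1) + l • X + c • W | 𝔊] :=
    condExp_mono hg (((integrable_const 1).add (hX.smul l)).add (hW.smul c))
      (ae_of_all _ hgle)
  have hlin : μ[(fun _ => 1) + l • X + c • W | 𝔊] =ᵐ[μ]
      (fun _ => 1) + l • μ[X | 𝔊] + c • D := by
    filter_upwards [condExp_add ((integrable_const 1).add (hX.smul l)) (hW.smul c) 𝔊,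
      condExp_add (integrable_const (1 : ℝ)) (hX.smul l) 𝔊, condExp_smul l X 𝔊,
      condExp_smul c W 𝔊] with ω h1 h2 h3 h4
    rw [h1, Pi.add_apply, h2, Pi.add_apply, condExp_const h𝔊, h3, h4]
    rfl
  filter_upwards [hpull, hbound, hlin, hX0] with ω hpull hbound hlin hX0
  rw [hpull, Pi.one_apply]
  calc exp (-(c * D ω)) * μ[g | 𝔊] ω ≤ exp (-(c * D ω)) * (1 + c * D ω) := by
        refine mul_le_mul_of_nonneg_left ?_ (exp_pos _).le
        simpa [hlin, hX0] using hbound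
    _ ≤ exp (-(c * D ω)) * exp (c * D ω) :=
        mul_le_mul_of_nonneg_left (by linarith [add_one_le_exp (c * D ω)]) (exp_pos _).le
    _ = 1 := by rw [← exp_add, neg_add_cancel, exp_zero]

end Conditional

section Product

variable {Ω : Type*} {m : MeasurableSpace Ω} {μ : Measure Ω} {Y : ℕ → Ω → ℝ} {C : ℝ}

lemma integrable_prod_Icc_of_ae_le [IsFiniteMeasure μ] (hY : ∀ i, AEStronglyMeasurable (Y i) μ)
    (hY0 : ∀ i ω, 0 ≤ Y i ω) (hYC : ∀ i, ∀ᵐ ω ∂μ, Y i ω ≤ C) (n : ℕ) :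
    Integrable (fun ω => ∏ i ∈ Icc 1 n, Y i ω) μ := by
  refine .of_bound (aestronglyMeasurable_fun_prod _ fun i _ => hY i) (C ^ n) ?_
  filter_upwards [ae_all_iff.2 hYC] with ω hω
  rw [norm_of_nonneg (prod_nonneg fun i _ => hY0 i ω)]
  calc ∏ i ∈ Icc 1 n, Y i ω ≤ ∏ _i ∈ Icc 1 n, C :=
        prod_le_prod (fun i _ => hY0 i ω) fun i _ => hω i
    _ = C ^ n := by simp

lemma integral_prod_Icc_le_one [IsProbabilityMeasure μ] {𝔉 : ℕ → MeasurableSpace Ω}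
    (hle : ∀ i, 𝔉 i ≤ m) (hmono : Monotone 𝔉) (hY : ∀ i, StronglyMeasurable[𝔉 i] (Y i))
    (hY0 : ∀ i ω, 0 ≤ Y i ω) (hYC : ∀ i, ∀ᵐ ω ∂μ, Y i ω ≤ C)
    (hcond : ∀ i, μ[Y (i + 1) | 𝔉 i] ≤ᵐ[μ] 1) (n : ℕ) :
    ∫ ω, ∏ i ∈ Icc 1 n, Y i ω ∂μ ≤ 1 := by
  have hYm : ∀ i, AEStronglyMeasurable (Y i) μ :=
    fun i => ((hY i).mono (hle i)).aestronglyMeasurable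
  have hint := integrable_prod_Icc_of_ae_le hYm hY0 hYC
  induction n with
  | zero => simp
  | succ n ih =>
    set P := fun ω => ∏ i ∈ Icc 1 n, Y i ω
    have hP : StronglyMeasurable[𝔉 n] P :=
      stronglyMeasurable_fun_prod _ fun i hi => (hY i).mono (hmono (mem_Icc.1 hi).2)
    have hsplit : (fun ω => ∏ i ∈ Icc 1 (n + 1), Y i ω) = P * Y (n + 1) :=
      funext fun ω => prod_Icc_succ_top (by omega) _
    have hpull := condExp_mul_of_stronglyMeasurable_left hP (hsplit ▸ hint (n + 1))
      (.of_bound (hYm (n + 1)) C (by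
        filter_upwards [hYC (n + 1)] with ω hω
        rwa [norm_of_nonneg (hY0 _ ω)]))
    calc ∫ ω, ∏ i ∈ Icc 1 (n + 1), Y i ω ∂μ = ∫ ω, μ[P * Y (n + 1) | 𝔉 n] ω ∂μ := by
          rw [hsplit, integral_condExp (hle n)]
      _ = ∫ ω, P ω * μ[Y (n + 1) | 𝔉 n] ω ∂μ := integral_congr_ae hpull
      _ ≤ ∫ ω, P ω ∂μ := by
          refine integral_mono_ae (integrable_condExp.congr hpull) (hint n) ?_
          filter_upwards [hcond n] with ω hω
          exact mul_le_of_le_one_right (prod_nonneg fun i _ => hY0 i ω) hω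
      _ ≤ 1 := ih

end Product

section Martingale

variable {Ω : Type*} {m : MeasurableSpace Ω} {μ : Measure Ω} {𝔉 : ℕ → MeasurableSpace Ω}
  {ξ : ℕ → Ω → ℝ} {y : ℝ}

-- `B_n(y)` of the paper
noncomputable def mixedQuadVar (μ : Measure Ω) (𝔉 : ℕ → MeasurableSpace Ω) (ξ : ℕ → Ω → ℝ)
    (y : ℝ) (n : ℕ) (ω : Ω) : ℝ :=
  (∑ i ∈ Icc 1 n, if y < ξ i ω then ξ i ω ^ 2 else 0) +
    ∑ i ∈ Icc 1 n, μ[fun ω' => if ξ i ω' ≤ y then ξ i ω' ^ 2 else 0 | 𝔉 (i - 1)] ω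

lemma exp_mul_sum_sub_mul_mixedQuadVar (μ : Measure Ω) (𝔉 : ℕ → MeasurableSpace Ω)
    (ξ : ℕ → Ω → ℝ) (y l c : ℝ) (n : ℕ) (ω : Ω) :
    exp (l * ∑ i ∈ Icc 1 n, ξ i ω - c * mixedQuadVar μ 𝔉 ξ y n ω) =
      ∏ i ∈ Icc 1 n, exp (-(c * μ[fun ω' => if ξ i ω' ≤ y then ξ i ω' ^ 2 else 0 | 𝔉 (i - 1)] ω)) *
        exp (l * ξ i ω - c * (if y < ξ i ω then ξ i ω ^ 2 else 0)) := by
  simp only [← exp_add, ← exp_sum, mixedQuadVar]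
  rw [sum_add_distrib, sum_sub_distrib, ← mul_sum, ← mul_sum, sum_neg_distrib, ← mul_sum]
  congr 1
  ring

theorem integrable_exp_and_integral_exp_sub_mixedQuadVar_le_one [IsProbabilityMeasure μ]
    (hle : ∀ i, 𝔉 i ≤ m) (hmono : Monotone 𝔉) (hadp : ∀ i, StronglyMeasurable[𝔉 i] (ξ i))
    (hsq : ∀ i, Integrable (fun ω => ξ i ω ^ 2) μ)
    (hmart : ∀ i, 1 ≤ i → μ[ξ i | 𝔉 (i - 1)] =ᵐ[μ] 0) {l c : ℝ} (hl : 0 ≤ l) (hy : 0 ≤ y)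
    (hly : l * y < 3) (hc : 3 * l ^ 2 ≤ 2 * c * (3 - l * y)) (n : ℕ) :
    Integrable (fun ω => exp (l * ∑ i ∈ Icc 1 n, ξ i ω - c * mixedQuadVar μ 𝔉 ξ y n ω)) μ ∧
      ∫ ω, exp (l * ∑ i ∈ Icc 1 n, ξ i ω - c * mixedQuadVar μ 𝔉 ξ y n ω) ∂μ ≤ 1 := by
  have hc0 : 0 ≤ c := by nlinarith
  have hlc : l ^ 2 ≤ 2 * c := by nlinarith [mul_nonneg hl hy]
  set W : ℕ → Ω → ℝ := fun i ω => if ξ i ω ≤ y then ξ i ω ^ 2 else 0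
  set g : ℕ → Ω → ℝ := fun i ω => exp (l * ξ i ω - c * (if y < ξ i ω then ξ i ω ^ 2 else 0))
  set Y : ℕ → Ω → ℝ := fun i ω => exp (-(c * μ[W i | 𝔉 (i - 1)] ω)) * g i ω
  have hξ : ∀ i, Measurable[𝔉 i] (ξ i) := fun i => (hadp i).measurable
  have hWm : ∀ i, Measurable[𝔉 i] (W i) := fun i =>
    Measurable.ite (measurableSet_le (hξ i) measurable_const) ((hξ i).pow_const 2)
      measurable_const
  have hgm : ∀ i, Measurable[𝔉 i] (g i) := fun i =>
    (((hξ i).const_mul l).sub ((Measurable.ite (measurableSet_lt measurable_const (hξ i))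
      ((hξ i).pow_const 2) measurable_const).const_mul c)).exp
  have hY : ∀ i, StronglyMeasurable[𝔉 i] (Y i) := fun i =>
    ((stronglyMeasurable_condExp.mono (hmono (Nat.sub_le i 1))).const_mul c).neg.measurable.exp
      |>.mul (hgm i) |>.stronglyMeasurable
  have hYC : ∀ i, ∀ᵐ ω ∂μ, Y i ω ≤ exp (l * y + 1 / 2) := fun i => by
    filter_upwards [condExp_nonneg (ae_of_all μ fun ω => by positivity : 0 ≤ᵐ[μ] W i)]
      with ω hω
    refine (mul_le_of_le_one_left (exp_pos _).le ?_).trans (exp_mul_sub_ite_le hl hy hlc _)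
    rw [exp_le_one_iff, neg_nonpos]
    exact mul_nonneg hc0 hω
  have hcond : ∀ i, μ[Y (i + 1) | 𝔉 i] ≤ᵐ[μ] 1 := fun i => by
    have hξint : Integrable (ξ (i + 1)) μ :=
      ((memLp_two_iff_integrable_sq ((hadp _).mono (hle _)).aestronglyMeasurable).2
        (hsq _)).integrable one_le_two
    refine condExp_exp_neg_mul_condExp_mul_le_one (hle i) hc0 hξint
      (by simpa using hmart (i + 1) le_add_self) ?_ (ae_of_all μ fun ω => by positivity) ?_
      (fun ω => exp_mul_sub_ite_le_one_add hl hy hly hc _)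
    · refine (hsq (i + 1)).mono' ((hWm _).mono (hle _) le_rfl).aestronglyMeasurable
        (ae_of_all μ fun ω => ?_)
      simp only [W]
      split_ifs <;> simp [sq_nonneg]
    · exact .of_bound ((hgm _).mono (hle _) le_rfl).aestronglyMeasurable _
        (ae_of_all μ fun ω => by
          rw [norm_of_nonneg (exp_pos _).le]
          exact exp_mul_sub_ite_le hl hy hlc _)
  simp_rw [exp_mul_sum_sub_mul_mixedQuadVar]
  exact ⟨integrable_prod_Icc_of_ae_le (fun i => ((hY i).mono (hle i)).aestronglyMeasurable)
      (fun i ω => by positivity) hYC n,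
    integral_prod_Icc_le_one hle hmono hY (fun i ω => by positivity) hYC hcond n⟩

end Martingale

section Slicing

variable {Ω : Type*} {m : MeasurableSpace Ω} {μ : Measure Ω}

def selfNormSlice (S B : Ω → ℝ) (x p q : ℝ) : Set Ω :=
  {ω | x * √(B ω) ≤ S ω ∧ p ≤ √(B ω) ∧ √(B ω) ≤ q}

lemma selfNormSlice_subset_biUnion {S B : Ω → ℝ} {x b δ : ℝ} {K : ℕ} (hK : 0 < K) :
    selfNormSlice S B x b (b * δ ^ K) ⊆
      ⋃ j ∈ range K, selfNormSlice S B x (b * δ ^ j) (b * δ ^ (j + 1)) := by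
  rintro ω ⟨hS, hb, hbK⟩
  induction K with
  | zero => omega
  | succ K ih =>
    rcases Nat.eq_zero_or_pos K with rfl | hK
    · exact Set.mem_biUnion (mem_range.2 one_pos) ⟨hS, by simpa using hb, hbK⟩
    by_cases hrK : √(B ω) ≤ b * δ ^ K
    · exact Set.biUnion_subset_biUnion_left (by simp) (ih hK hrK)
    · exact Set.mem_biUnion (mem_range.2 K.lt_succ_self) ⟨hS, (not_le.1 hrK).le, hbK⟩

lemma measureReal_selfNormSlice_le [IsFiniteMeasure μ] {S B : Ω → ℝ} {l c x p q : ℝ}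
    (hint : Integrable (fun ω => exp (l * S ω - c * B ω)) μ)
    (hint1 : ∫ ω, exp (l * S ω - c * B ω) ∂μ ≤ 1) (hl : 0 ≤ l) (hc : 0 ≤ c) (hp : 0 < p)
    (hlc : l * x = c * (p + q)) :
    μ.real (selfNormSlice S B x p q) ≤ exp (-(c * p * q)) := by
  have hsub : selfNormSlice S B x p q ⊆ {ω | exp (c * p * q) ≤ exp (l * S ω - c * B ω)} := by
    rintro ω ⟨hS, hpr, hrq⟩
    have hB : B ω = √(B ω) ^ 2 := (sq_sqrt (sqrt_pos.1 (hp.trans_le hpr)).le).symm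
    show exp (c * p * q) ≤ exp (l * S ω - c * B ω)
    rw [exp_le_exp, hB]
    -- `l x r - c r² = c p q + c (r - p) (q - r)` for `r = √(B ω)`
    nlinarith [mul_le_mul_of_nonneg_left hS hl,
      mul_nonneg (mul_nonneg hc (sub_nonneg.2 hpr)) (sub_nonneg.2 hrq)]
  have hmarkov := mul_meas_ge_le_integral_of_nonneg (ae_of_all _ fun ω => (exp_pos _).le) hint
    (exp (c * p * q))
  rw [exp_neg, ← one_div, le_div_iff₀' (exp_pos _)]
  exact (mul_le_mul_of_nonneg_left (measureReal_mono hsub) (exp_pos _).le).trans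
    (hmarkov.trans hint1)

end Slicing

lemma exists_geometric_grid {M x : ℝ} (hM : 1 ≤ M) (hx : 0 ≤ x) :
    ∃ (K : ℕ) (δ : ℝ), 0 < K ∧ (K : ℝ) ≤ 1 + 2 * (1 + x) * log M ∧ 1 ≤ δ ∧ δ ^ K = M ∧
      x * (δ - 1) ≤ δ + 1 := by
  have hlogM : 0 ≤ 2 * (1 + x) * log M := by have := log_nonneg hM; positivity
  set K := max 1 ⌈2 * (1 + x) * log M⌉₊
  have hK : 0 < K := lt_max_of_lt_left one_pos
  have hKpos : (0 : ℝ) < K := by exact_mod_cast hK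
  set δ := M ^ (K⁻¹ : ℝ)
  have hδ : 1 ≤ δ := one_le_rpow hM (by positivity)
  have hlogδ : log δ ≤ 1 / (2 * (1 + x)) := by
    rw [log_rpow (by linarith), inv_mul_le_iff₀ hKpos, mul_one_div, le_div_iff₀ (by positivity)]
    have : 2 * (1 + x) * log M ≤ K :=
      (Nat.le_ceil _).trans (by exact_mod_cast le_max_right _ _)
    linarith
  refine ⟨K, δ, hK, ?_, hδ, rpow_inv_natCast_pow (by linarith) hK.ne', ?_⟩
  · rw [Nat.cast_max, Nat.cast_one]
    exact max_le (by linarith) (by linarith [Nat.ceil_lt_add_one hlogM])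
  · -- `δ - 1 ≤ δ log δ ≤ δ / (2 (1 + x))`
    have hδlog := one_sub_inv_le_log_of_pos (by linarith : (0 : ℝ) < δ)
    have h1 : δ - 1 ≤ δ / (2 * (1 + x)) := by
      have := mul_le_mul_of_nonneg_left (hδlog.trans hlogδ) (by linarith : (0 : ℝ) ≤ δ)
      rw [mul_sub, mul_inv_cancel₀ (by linarith), mul_one_div] at this
      linarith
    have h2 : x * (δ / (2 * (1 + x))) ≤ δ := by
      rw [mul_div_assoc', div_le_iff₀ (by positivity)]
      nlinarith
    nlinarith [mul_le_mul_of_nonneg_left h1 hx]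

section MartingaleSlicing

variable {Ω : Type*} {m : MeasurableSpace Ω} {μ : Measure Ω} [IsProbabilityMeasure μ]
  {𝔉 : ℕ → MeasurableSpace Ω} {ξ : ℕ → Ω → ℝ} {x y b : ℝ}

theorem measureReal_selfNormSlice_mixedQuadVar_le (hle : ∀ i, 𝔉 i ≤ m) (hmono : Monotone 𝔉)
    (hadp : ∀ i, StronglyMeasurable[𝔉 i] (ξ i)) (hsq : ∀ i, Integrable (fun ω => ξ i ω ^ 2) μ)
    (hmart : ∀ i, 1 ≤ i → μ[ξ i | 𝔉 (i - 1)] =ᵐ[μ] 0) (hx : 0 < x) (hy : 0 ≤ y) (hb : 0 < b)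
    {p q : ℝ} (hbp : b ≤ p) (hbq : b ≤ q) (n : ℕ) :
    μ.real (selfNormSlice (fun ω => ∑ i ∈ Icc 1 n, ξ i ω) (mixedQuadVar μ 𝔉 ξ y n) x p q) ≤
      exp (-(2 * x ^ 2 * p * q / ((1 + x * y / (3 * b)) * (p + q) ^ 2))) := by
  set t := x * y / (3 * b)
  have ht : 0 ≤ t := by positivity
  have hpq : 0 < p + q := by linarith
  -- `c (p + q) = l x` balances the exponent at both ends of the slice
  set c := 2 * x ^ 2 / ((1 + t) * (p + q) ^ 2)
  set l := 2 * x / ((1 + t) * (p + q))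
  have hlc : l * x = c * (p + q) := by simp only [l, c]; field_simp
  have hly : l * y ≤ 3 * t / (1 + t) := by
    have : l * y = 3 * t / (1 + t) * (2 * b / (p + q)) := by simp only [l, t]; field_simp
    rw [this]
    exact mul_le_of_le_one_right (by positivity) ((div_le_one hpq).2 (by linarith))
  have hc : 3 * l ^ 2 ≤ 2 * c * (3 - l * y) := by
    have hl2 : l ^ 2 = c * (2 / (1 + t)) := by simp only [l, c]; field_simp
    have h3 : 3 / (1 + t) ≤ 3 - l * y := by
      have : 3 / (1 + t) = 3 - 3 * t / (1 + t) := by field_simp; ring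
      linarith
    rw [hl2]
    calc 3 * (c * (2 / (1 + t))) = 2 * c * (3 / (1 + t)) := by ring
      _ ≤ 2 * c * (3 - l * y) := by gcongr
  have hly3 : l * y < 3 := hly.trans_lt ((div_lt_iff₀ (by positivity)).2 (by linarith))
  obtain ⟨hint, hint1⟩ := integrable_exp_and_integral_exp_sub_mixedQuadVar_le_one hle hmono hadp
    hsq hmart (by positivity) hy hly3 hc n
  refine (measureReal_selfNormSlice_le hint hint1 (by positivity) (by positivity)
    (hb.trans_le hbp) hlc).trans_eq ?_
  congr 2
  simp only [c]
  field_simp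

theorem measureReal_selfNormSlice_mixedQuadVar_geometric_le (hle : ∀ i, 𝔉 i ≤ m)
    (hmono : Monotone 𝔉) (hadp : ∀ i, StronglyMeasurable[𝔉 i] (ξ i))
    (hsq : ∀ i, Integrable (fun ω => ξ i ω ^ 2) μ)
    (hmart : ∀ i, 1 ≤ i → μ[ξ i | 𝔉 (i - 1)] =ᵐ[μ] 0) (hx : 0 < x) (hy : 0 ≤ y) (hb : 0 < b)
    {δ : ℝ} (hδ : 1 ≤ δ) (hxδ : x * (δ - 1) ≤ δ + 1) (n j : ℕ) :
    μ.real (selfNormSlice (fun ω => ∑ i ∈ Icc 1 n, ξ i ω) (mixedQuadVar μ 𝔉 ξ y n) x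
        (b * δ ^ j) (b * δ ^ (j + 1))) ≤
      exp (1 / 2) * exp (-x ^ 2 / (2 * (1 + x * y / (3 * b)))) := by
  set t := x * y / (3 * b)
  have ht : 0 ≤ t := by positivity
  have hv : b ≤ b * δ ^ j := le_mul_of_one_le_right hb.le (one_le_pow₀ hδ)
  refine (measureReal_selfNormSlice_mixedQuadVar_le hle hmono hadp hsq hmart hx hy hb hv
    (hv.trans (by gcongr; exact j.le_succ)) n).trans ?_
  rw [← exp_add, exp_le_exp]
  have hdefect : 2 * x ^ 2 * (b * δ ^ j) * (b * δ ^ (j + 1)) /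
      ((1 + t) * (b * δ ^ j + b * δ ^ (j + 1)) ^ 2) =
      x ^ 2 / (2 * (1 + t)) - (x * (δ - 1)) ^ 2 / (2 * (1 + t) * (δ + 1) ^ 2) := by
    have : 0 < b * δ ^ j := hb.trans_le hv
    field_simp
    ring
  have hsmall : (x * (δ - 1)) ^ 2 / (2 * (1 + t) * (δ + 1) ^ 2) ≤ 1 / 2 := by
    rw [div_le_iff₀ (by positivity)]
    nlinarith [mul_nonneg hx.le (sub_nonneg.2 hδ)]
  rw [hdefect, neg_div]
  linarith

end MartingaleSlicing

theorem stmt_10 {Ω : Type*} {m : MeasurableSpace Ω} {μ : Measure Ω} [IsProbabilityMeasure μ]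
    (𝔉 : ℕ → MeasurableSpace Ω) (hle : ∀ i, 𝔉 i ≤ m) (hmono : Monotone 𝔉)
    (ξ : ℕ → Ω → ℝ)
    (hadp : ∀ i, StronglyMeasurable[𝔉 i] (ξ i))
    (hsq : ∀ i, Integrable (fun ω => (ξ i ω) ^ 2) μ)
    (hmart : ∀ i : ℕ, 1 ≤ i → μ[ξ i | 𝔉 (i - 1)] =ᵐ[μ] 0)
    (n : ℕ) (x y b M : ℝ) (hx : 0 < x) (hy : 0 ≤ y) (hb : 0 < b) (hM : 1 ≤ M)
    (S B : Ω → ℝ)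
    (hS : S = fun ω => ∑ i ∈ Finset.Icc 1 n, ξ i ω)
    (hB : B = fun ω =>
      (∑ i ∈ Finset.Icc 1 n, if y < ξ i ω then (ξ i ω) ^ 2 else 0)
        + ∑ i ∈ Finset.Icc 1 n,
            (μ[fun ω' => if ξ i ω' ≤ y then (ξ i ω') ^ 2 else 0 | 𝔉 (i - 1)]) ω) :
    (μ {ω | x * Real.sqrt (B ω) ≤ S ω ∧ b ≤ Real.sqrt (B ω) ∧ Real.sqrt (B ω) ≤ b * M}).toReal ≤
      Real.sqrt (Real.exp 1) * (1 + 2 * (1 + x) * Real.log M) *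
        Real.exp (-x ^ 2 / (2 * (1 + x * y / (3 * b)))) := by
  replace hB : B = mixedQuadVar μ 𝔉 ξ y n := hB
  obtain ⟨K, δ, hK, hKM, hδ, hδK, hxδ⟩ := exists_geometric_grid hM hx.le
  subst hS hB hδK
  calc μ.real (selfNormSlice _ _ x b (b * δ ^ K))
      ≤ ∑ j ∈ range K, μ.real (selfNormSlice _ _ x (b * δ ^ j) (b * δ ^ (j + 1))) :=
        (measureReal_mono (selfNormSlice_subset_biUnion hK) (measure_ne_top _ _)).trans
          (measureReal_biUnion_finset_le _ _)
    _ ≤ ∑ j ∈ range K, exp (1 / 2) * exp (-x ^ 2 / (2 * (1 + x * y / (3 * b)))) :=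
        sum_le_sum fun j _ =>
          measureReal_selfNormSlice_mixedQuadVar_geometric_le hle hmono hadp hsq hmart hx hy hb
            hδ hxδ n j
    _ = exp (1 / 2) * K * exp (-x ^ 2 / (2 * (1 + x * y / (3 * b)))) := by
        rw [sum_const, card_range, nsmul_eq_mul]
        ring
    _ ≤ _ := by
        rw [← exp_half]
        gcongr
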